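/- Suppose v, Λ are such that for k = 1,2,3, |r ∂v_k(t,x) − ⃗ω Λ_k(r − c₁t, x/|x|)| ≤ C ε² ⟨t+r⟩^{−1+2δ} ⟨c₁t − r⟩^{−δ} for all (t,x) with x ≠ 0, where 0 < δ < 1/4, r = |x|, ⃗ω = (−c₁, x/|x|). Then ‖∂v_k(t,·) − ⃗ω r^{−1} Λ_k(r − c₁t, ·/|·|)‖²_{L²(ℝ³)} ≤ C ε⁴ ⟨t⟩^{−1+2δ}, and in particular this L² norm tends to 0 as t → ∞. -/

import Mathlib

open MeasureTheory Filter

noncomputable section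

abbrev E3 := EuclideanSpace ℝ (Fin 3)

/-- Time derivative `∂_t f`. -/
def pdt (f : ℝ × E3 → ℝ) (p : ℝ × E3) : ℝ :=
  fderiv ℝ f p ((1 : ℝ), (0 : E3))

/-- Spatial partial derivative `∂_i f`. -/
def pdx (i : Fin 3) (f : ℝ × E3 → ℝ) (p : ℝ × E3) : ℝ :=
  fderiv ℝ f p ((0 : ℝ), EuclideanSpace.single i 1)

/-- Space-time gradient `∂ f = (∂_t f, ∇f)` as a 4-vector. -/
def dfour (f : ℝ × E3 → ℝ) (p : ℝ × E3) : Fin 4 → ℝ :=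
  ![pdt f p, pdx 0 f p, pdx 1 f p, pdx 2 f p]

/-- Null covector `⃗ω = (-c₁, x/|x|)`. -/
def omega4 (c1 : ℝ) (x : E3) : Fin 4 → ℝ :=
  ![-c1, x 0 / ‖x‖, x 1 / ‖x‖, x 2 / ‖x‖]

/-- Euclidean norm of a space-time 4-vector. -/
def norm4 (a : Fin 4 → ℝ) : ℝ := Real.sqrt (∑ μ, (a μ) ^ 2)

/-- Japanese bracket `⟨s⟩ = (1+s²)^{1/2}`. -/
def jpn (s : ℝ) : ℝ := Real.sqrt (1 + s ^ 2)

open Set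
open scoped ENNReal

/-! Dividing the pointwise bound by `r = ‖x‖` and passing to polar coordinates, the factor `r²`
of the volume element cancels `r⁻²`, so the squared `L²` norm is at most
`|S²| C² ε⁴ ∫₀^∞ ⟨t+r⟩^{-2+4δ} ⟨c₁t-r⟩^{-2δ} dr`. For `r ≤ (1+c₁)t` one bounds `⟨t+r⟩ ≥ ⟨t⟩` and
integrates `⟨c₁t-r⟩^{-2δ}` over an interval of length `≲ t`, which gives `⟨t⟩^{-2+4δ} ⟨t⟩^{1-2δ}`;
for `r > (1+c₁)t` one has `⟨t+r⟩ ≥ ⟨r-c₁t⟩`, and the tail `∫_{s>t} ⟨s⟩^{-2+2δ} ds` is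
`≲ ⟨t⟩^{-1+2δ}`. -/

section Polar

variable {E : Type*} [NormedAddCommGroup E] [NormedSpace ℝ E] [MeasurableSpace E] [BorelSpace E]
  [FiniteDimensional ℝ E] (μ : Measure E) [μ.IsAddHaarMeasure]

theorem lintegral_fun_norm_addHaar [Nontrivial E] {f : ℝ → ℝ≥0∞} (hf : Measurable f) :
    ∫⁻ x, f ‖x‖ ∂μ = μ.toSphere univ *
      ∫⁻ y in Ioi (0 : ℝ), ENNReal.ofReal (y ^ (Module.finrank ℝ E - 1)) * f y := by
  have hfm : Measurable fun y : Ioi (0 : ℝ) => f y := hf.comp measurable_subtype_coe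
  calc ∫⁻ x, f ‖x‖ ∂μ = ∫⁻ x : ({0}ᶜ : Set E), f ‖x.1‖ ∂(μ.comap (↑)) := by
        rw [lintegral_subtype_comap (measurableSet_singleton 0).compl (fun x => f ‖x‖),
          restrict_compl_singleton]
    _ = ∫⁻ p, f p.2 ∂(μ.toSphere.prod (.volumeIoiPow (Module.finrank ℝ E - 1))) := by
        simpa using μ.measurePreserving_homeomorphUnitSphereProd.lintegral_comp_emb
          (Homeomorph.measurableEmbedding _) (fun p => f p.2)
    _ = μ.toSphere univ * ∫⁻ y, f y ∂(.volumeIoiPow (Module.finrank ℝ E - 1)) := by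
        rw [lintegral_prod (fun p : Metric.sphere (0 : E) 1 × Ioi (0 : ℝ) => f p.2)
          (hfm.comp measurable_snd).aemeasurable]
        simp [mul_comm]
    _ = _ := by
        rw [Measure.volumeIoiPow, lintegral_withDensity_eq_lintegral_mul _
          (measurable_subtype_coe.pow_const _).ennreal_ofReal hfm]
        exact congrArg _ (lintegral_subtype_comap measurableSet_Ioi
          (fun y => ENNReal.ofReal (y ^ (Module.finrank ℝ E - 1)) * f y))

theorem lintegral_sq_div_norm_of_finrank_eq_three (hE : Module.finrank ℝ E = 3) {g : ℝ → ℝ}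
    (hg : Measurable g) :
    ∫⁻ x, ENNReal.ofReal ((g ‖x‖ / ‖x‖) ^ 2) ∂μ =
      μ.toSphere univ * ∫⁻ r in Ioi (0 : ℝ), ENNReal.ofReal (g r ^ 2) := by
  have : Nontrivial E := Module.nontrivial_of_finrank_eq_succ hE
  rw [lintegral_fun_norm_addHaar μ (f := fun r => ENNReal.ofReal ((g r / r) ^ 2))
    ((hg.div measurable_id).pow_const 2).ennreal_ofReal, hE]
  congr 1
  refine setLIntegral_congr_fun measurableSet_Ioi fun r (hr : 0 < r) => ?_
  rw [← ENNReal.ofReal_mul (by positivity)]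
  congr 1
  field_simp
  norm_num [mul_comm]

theorem lintegral_sq_le_of_abs_le_div_norm (hE : Module.finrank ℝ E = 3) {F : E → ℝ}
    {g : ℝ → ℝ} (hg : Measurable g) (hF : ∀ x ≠ 0, |F x| ≤ g ‖x‖ / ‖x‖) :
    ∫⁻ x, ENNReal.ofReal (F x ^ 2) ∂μ ≤
      μ.toSphere univ * ∫⁻ r in Ioi (0 : ℝ), ENNReal.ofReal (g r ^ 2) := by
  have : Nontrivial E := Module.nontrivial_of_finrank_eq_succ hE
  rw [← lintegral_sq_div_norm_of_finrank_eq_three μ hE hg]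
  refine lintegral_mono_ae ?_
  filter_upwards [compl_mem_ae_iff.2 (measure_singleton (0 : E))] with x (hx : x ≠ 0)
  refine ENNReal.ofReal_le_ofReal ?_
  simpa only [sq_abs] using pow_le_pow_left₀ (abs_nonneg _) (hF x hx) 2

end Polar

lemma jpn_pos (s : ℝ) : 0 < jpn s := Real.sqrt_pos.2 (by positivity)

lemma one_le_jpn (s : ℝ) : 1 ≤ jpn s := Real.one_le_sqrt.2 (by nlinarith)

lemma abs_le_jpn (s : ℝ) : |s| ≤ jpn s := Real.abs_le_sqrt (by nlinarith)

lemma jpn_neg (s : ℝ) : jpn (-s) = jpn s := by simp [jpn]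

lemma jpn_le_jpn {s u : ℝ} (hs : 0 ≤ s) (hsu : s ≤ u) : jpn s ≤ jpn u :=
  Real.sqrt_le_sqrt (by nlinarith)

lemma jpn_le_one_add_abs (s : ℝ) : jpn s ≤ 1 + |s| :=
  Real.sqrt_le_iff.2 ⟨by positivity, by nlinarith [sq_abs s, abs_nonneg s]⟩

lemma continuous_jpn : Continuous jpn := by unfold jpn; fun_prop

lemma tendsto_jpn_atTop : Tendsto jpn atTop atTop :=
  tendsto_atTop_mono (fun s => (le_abs_self s).trans (abs_le_jpn s)) tendsto_id

lemma tendsto_jpn_rpow_nhds_zero {p : ℝ} (hp : p < 0) :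
    Tendsto (fun s => jpn s ^ p) atTop (nhds 0) := by
  simpa [Function.comp_def] using (tendsto_rpow_neg_atTop (neg_pos.2 hp)).comp tendsto_jpn_atTop

lemma jpn_rpow_le_one_add_abs_rpow {p : ℝ} (hp : p ≤ 0) (s : ℝ) :
    jpn s ^ p ≤ 2 ^ (-p) * (1 + |s|) ^ p := by
  have h : (1 + |s|) / 2 ≤ jpn s := by linarith [one_le_jpn s, abs_le_jpn s]
  calc jpn s ^ p ≤ ((1 + |s|) / 2) ^ p := Real.rpow_le_rpow_of_nonpos (by positivity) h hp
    _ = 2 ^ (-p) * (1 + |s|) ^ p := by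
      rw [Real.div_rpow (by positivity) zero_le_two, Real.rpow_neg zero_le_two, div_eq_inv_mul]

lemma continuous_one_add_abs_rpow (b : ℝ) : Continuous fun s : ℝ => (1 + |s|) ^ b :=
  (continuous_const.add continuous_abs).rpow_const fun s =>
    Or.inl (by positivity : (0 : ℝ) < 1 + |s|).ne'

lemma integral_one_add_abs_rpow {b L : ℝ} (hb : -1 < b) (hL : 0 ≤ L) :
    ∫ s in -L..L, (1 + |s|) ^ b = 2 * (((1 + L) ^ (b + 1) - 1) / (b + 1)) := by
  have hint := (continuous_one_add_abs_rpow b).intervalIntegrable (μ := volume)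
  have hhalf : ∫ s in (0 : ℝ)..L, (1 + |s|) ^ b = ((1 + L) ^ (b + 1) - 1) / (b + 1) := by
    rw [intervalIntegral.integral_congr (g := fun s => (s + 1) ^ b) fun s hs => by
        rw [uIcc_of_le hL] at hs; simp [abs_of_nonneg hs.1, add_comm],
      intervalIntegral.integral_comp_add_right (fun s => s ^ b), integral_rpow (Or.inl hb)]
    simp [add_comm]
  have hsymm : ∫ s in -L..0, (1 + |s|) ^ b = ∫ s in (0 : ℝ)..L, (1 + |s|) ^ b := by
    simpa using (intervalIntegral.integral_comp_neg (a := 0) (b := L) fun s => (1 + |s|) ^ b).symm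
  rw [← intervalIntegral.integral_add_adjacent_intervals (hint _ 0) (hint 0 _), hsymm, hhalf]
  ring

lemma lintegral_Ioc_one_add_abs_rpow_le {b L : ℝ} (hb : -1 < b) (hL : 0 ≤ L) :
    ∫⁻ s in Ioc (-L) L, ENNReal.ofReal ((1 + |s|) ^ b) ≤
      ENNReal.ofReal (2 * (1 + L) ^ (b + 1) / (b + 1)) := by
  rw [← ofReal_integral_eq_lintegral_ofReal (continuous_one_add_abs_rpow b).integrableOn_Ioc
    (Eventually.of_forall fun s => by positivity), ← intervalIntegral.integral_of_le (by linarith),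
    integral_one_add_abs_rpow hb hL, mul_div_assoc]
  gcongr
  · linarith
  · linarith

lemma lintegral_Ioi_rpow {q T : ℝ} (hq : q < -1) (hT : 0 < T) :
    ∫⁻ u in Ioi T, ENNReal.ofReal (u ^ q) = ENNReal.ofReal (T ^ (q + 1) / -(q + 1)) := by
  rw [← ofReal_integral_eq_lintegral_ofReal (integrableOn_Ioi_rpow_of_lt hq hT),
    integral_Ioi_rpow_of_lt hq hT, neg_div, div_neg]
  filter_upwards [ae_restrict_mem measurableSet_Ioi] with u (hu : T < u)
  exact Real.rpow_nonneg (hT.trans hu).le q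

lemma setLIntegral_comp_sub_right (f : ℝ → ℝ≥0∞) (m : ℝ) (S : Set ℝ) :
    ∫⁻ r in S, f (r - m) = ∫⁻ s in (· - m) '' S, f s :=
  (measurePreserving_sub_right volume m).setLIntegral_comp_emb
    (Homeomorph.subRight m).measurableEmbedding f S

section ConeIntegral

variable {a b c t : ℝ}

lemma lintegral_Ioc_jpn_add_rpow_mul_jpn_sub_rpow_le (hc : 0 ≤ c) (ha : a ≤ 0) (hb1 : -1 < b)
    (hb0 : b ≤ 0) (ht : 0 ≤ t) :
    ∫⁻ r in Ioc 0 ((1 + c) * t), ENNReal.ofReal (jpn (t + r) ^ a * jpn (c * t - r) ^ b) ≤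
      ENNReal.ofReal (4 * 2 ^ (-b) * (1 + c) / (b + 1) * jpn t ^ (a + b + 1)) := by
  set R := (1 + c) * t
  have hR : 0 ≤ R := by positivity
  have hj := jpn_pos t
  have hpt : ∀ r ∈ Ioc 0 R, ENNReal.ofReal (jpn (t + r) ^ a * jpn (c * t - r) ^ b) ≤
      ENNReal.ofReal (2 ^ (-b) * jpn t ^ a) * ENNReal.ofReal ((1 + |r - c * t|) ^ b) := by
    intro r hr
    rw [← ENNReal.ofReal_mul (by positivity), ← neg_sub, jpn_neg]
    refine ENNReal.ofReal_le_ofReal ?_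
    calc jpn (t + r) ^ a * jpn (r - c * t) ^ b ≤ jpn t ^ a * (2 ^ (-b) * (1 + |r - c * t|) ^ b) :=
          mul_le_mul
            (Real.rpow_le_rpow_of_nonpos (jpn_pos t) (jpn_le_jpn ht (by linarith [hr.1])) ha)
            (jpn_rpow_le_one_add_abs_rpow hb0 _) (Real.rpow_nonneg (jpn_pos _).le _) (by positivity)
      _ = _ := by ring
  have hbase : 1 + R ≤ 2 * (1 + c) * jpn t := by
    nlinarith [one_le_jpn t, abs_le_jpn t, abs_of_nonneg ht]
  calc ∫⁻ r in Ioc 0 R, ENNReal.ofReal (jpn (t + r) ^ a * jpn (c * t - r) ^ b)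
      ≤ ∫⁻ r in Ioc 0 R, ENNReal.ofReal (2 ^ (-b) * jpn t ^ a) *
          ENNReal.ofReal ((1 + |r - c * t|) ^ b) := setLIntegral_mono' measurableSet_Ioc hpt
    _ = ENNReal.ofReal (2 ^ (-b) * jpn t ^ a) *
          ∫⁻ s in Ioc (-(c * t)) t, ENNReal.ofReal ((1 + |s|) ^ b) := by
      rw [lintegral_const_mul' _ _ ENNReal.ofReal_ne_top,
        setLIntegral_comp_sub_right (fun s => ENNReal.ofReal ((1 + |s|) ^ b)), image_sub_const_Ioc,
        zero_sub, show R - c * t = t by ring]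
    _ ≤ ENNReal.ofReal (2 ^ (-b) * jpn t ^ a) *
          ∫⁻ s in Ioc (-R) R, ENNReal.ofReal ((1 + |s|) ^ b) := by
      gcongr
      · nlinarith
      · nlinarith
    _ ≤ ENNReal.ofReal (2 ^ (-b) * jpn t ^ a) *
          ENNReal.ofReal (2 * (1 + R) ^ (b + 1) / (b + 1)) := by
      gcongr
      exact lintegral_Ioc_one_add_abs_rpow_le hb1 hR
    _ ≤ _ := by
      rw [← ENNReal.ofReal_mul (by positivity)]
      refine ENNReal.ofReal_le_ofReal ?_
      have hpow : (1 + R) ^ (b + 1) ≤ 2 * (1 + c) * jpn t ^ (b + 1) := calc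
        (1 + R) ^ (b + 1) ≤ (2 * (1 + c) * jpn t) ^ (b + 1) :=
          Real.rpow_le_rpow (by positivity) hbase (by linarith)
        _ = (2 * (1 + c)) ^ (b + 1) * jpn t ^ (b + 1) :=
          Real.mul_rpow (by positivity) (jpn_pos t).le
        _ ≤ 2 * (1 + c) * jpn t ^ (b + 1) := by
          gcongr
          exact Real.rpow_le_self_of_one_le (by linarith) (by linarith)
      calc 2 ^ (-b) * jpn t ^ a * (2 * (1 + R) ^ (b + 1) / (b + 1))
          ≤ 2 ^ (-b) * jpn t ^ a * (2 * (2 * (1 + c) * jpn t ^ (b + 1)) / (b + 1)) := by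
            gcongr; linarith
        _ = _ := by rw [add_assoc, Real.rpow_add hj a (b + 1)]; ring

lemma lintegral_Ioi_jpn_add_rpow_mul_jpn_sub_rpow_le (hc : 0 ≤ c) (ha : a ≤ 0) (hab : a + b < -1)
    (ht : 0 ≤ t) :
    ∫⁻ r in Ioi ((1 + c) * t), ENNReal.ofReal (jpn (t + r) ^ a * jpn (c * t - r) ^ b) ≤
      ENNReal.ofReal (2 ^ (-(a + b)) / -(a + b + 1) * jpn t ^ (a + b + 1)) := by
  have hpt : ∀ r ∈ Ioi ((1 + c) * t), ENNReal.ofReal (jpn (t + r) ^ a * jpn (c * t - r) ^ b) ≤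
      ENNReal.ofReal (2 ^ (-(a + b))) * ENNReal.ofReal ((r - (c * t - 1)) ^ (a + b)) := by
    intro r (hr : (1 + c) * t < r)
    have hs : 0 ≤ r - c * t := by nlinarith
    rw [← ENNReal.ofReal_mul (by positivity), ← neg_sub, jpn_neg]
    refine ENNReal.ofReal_le_ofReal ?_
    calc jpn (t + r) ^ a * jpn (r - c * t) ^ b ≤ jpn (r - c * t) ^ a * jpn (r - c * t) ^ b := by
          gcongr ?_ * _
          · exact Real.rpow_nonneg (jpn_pos _).le _
          · exact Real.rpow_le_rpow_of_nonpos (jpn_pos _)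
              (jpn_le_jpn hs (by nlinarith [mul_nonneg hc ht])) ha
      _ = jpn (r - c * t) ^ (a + b) := (Real.rpow_add (jpn_pos _) a b).symm
      _ ≤ 2 ^ (-(a + b)) * (r - (c * t - 1)) ^ (a + b) := by
          convert jpn_rpow_le_one_add_abs_rpow (p := a + b) (by linarith) (r - c * t) using 3
          rw [abs_of_nonneg hs]; ring
  have hj := jpn_pos t
  calc ∫⁻ r in Ioi ((1 + c) * t), ENNReal.ofReal (jpn (t + r) ^ a * jpn (c * t - r) ^ b)
      ≤ ∫⁻ r in Ioi ((1 + c) * t), ENNReal.ofReal (2 ^ (-(a + b))) *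
          ENNReal.ofReal ((r - (c * t - 1)) ^ (a + b)) := setLIntegral_mono' measurableSet_Ioi hpt
    _ = ENNReal.ofReal (2 ^ (-(a + b))) * ∫⁻ u in Ioi (t + 1), ENNReal.ofReal (u ^ (a + b)) := by
      rw [lintegral_const_mul' _ _ ENNReal.ofReal_ne_top,
        setLIntegral_comp_sub_right (fun u => ENNReal.ofReal (u ^ (a + b))), image_sub_const_Ioi,
        show (1 + c) * t - (c * t - 1) = t + 1 by ring]
    _ = ENNReal.ofReal (2 ^ (-(a + b)) * ((t + 1) ^ (a + b + 1) / -(a + b + 1))) := by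
      rw [lintegral_Ioi_rpow hab (by linarith), ← ENNReal.ofReal_mul (by positivity)]
    _ ≤ _ := by
      refine ENNReal.ofReal_le_ofReal ?_
      have hjt : jpn t ≤ t + 1 := by
        simpa [abs_of_nonneg ht, add_comm] using jpn_le_one_add_abs t
      rw [div_mul_eq_mul_div, mul_div_assoc]
      gcongr ?_ * (?_ / _)
      · linarith
      · exact Real.rpow_le_rpow_of_nonpos hj hjt (by linarith)

theorem exists_lintegral_jpn_add_rpow_mul_jpn_sub_rpow_le (hc : 0 ≤ c) (hb1 : -1 < b)
    (hb0 : b ≤ 0) (hab : a + b < -1) :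
    ∃ K, 0 ≤ K ∧ ∀ t, 0 ≤ t →
      ∫⁻ r in Ioi 0, ENNReal.ofReal (jpn (t + r) ^ a * jpn (c * t - r) ^ b) ≤
        ENNReal.ofReal (K * jpn t ^ (a + b + 1)) := by
  have hA : 0 ≤ 4 * 2 ^ (-b) * (1 + c) / (b + 1) :=
    div_nonneg (by positivity) (by linarith)
  have hB : 0 ≤ 2 ^ (-(a + b)) / -(a + b + 1) := div_nonneg (by positivity) (by linarith)
  refine ⟨_, add_nonneg hA hB, fun t ht => ?_⟩
  have hj := jpn_pos t
  rw [← Ioc_union_Ioi_eq_Ioi (by positivity : 0 ≤ (1 + c) * t),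
    lintegral_union measurableSet_Ioi (Ioc_disjoint_Ioi le_rfl)]
  refine (add_le_add (lintegral_Ioc_jpn_add_rpow_mul_jpn_sub_rpow_le hc (by linarith) hb1 hb0 ht)
    (lintegral_Ioi_jpn_add_rpow_mul_jpn_sub_rpow_le hc (by linarith) hab ht)).trans_eq ?_
  rw [← ENNReal.ofReal_add (by positivity) (by positivity), add_mul]

theorem exists_lintegral_sq_jpn_add_rpow_mul_jpn_sub_rpow_le {p q : ℝ} (hc : 0 ≤ c)
    (hq1 : -1 < 2 * q) (hq0 : q ≤ 0) (hpq : 2 * (p + q) < -1) :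
    ∃ K, 0 ≤ K ∧ ∀ t, 0 ≤ t →
      ∫⁻ r in Ioi 0, ENNReal.ofReal ((jpn (t + r) ^ p * jpn (c * t - r) ^ q) ^ 2) ≤
        ENNReal.ofReal (K * jpn t ^ (2 * (p + q) + 1)) := by
  obtain ⟨K, hK, hrad⟩ := exists_lintegral_jpn_add_rpow_mul_jpn_sub_rpow_le (a := 2 * p)
    (b := 2 * q) hc hq1 (by linarith) (by linarith)
  refine ⟨K, hK, fun t ht => ?_⟩
  convert hrad t ht using 4 with r
  · rw [mul_pow, mul_comm 2 p, mul_comm 2 q, Real.rpow_mul (jpn_pos _).le,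
      Real.rpow_mul (jpn_pos _).le, Real.rpow_two, Real.rpow_two]
  · ring

end ConeIntegral

lemma norm4_nonneg (a : Fin 4 → ℝ) : 0 ≤ norm4 a := Real.sqrt_nonneg _

lemma norm4_const_mul (c : ℝ) (a : Fin 4 → ℝ) : norm4 (fun μ => c * a μ) = |c| * norm4 a := by
  simp_rw [norm4, mul_pow, ← Finset.mul_sum, Real.sqrt_mul (sq_nonneg c), Real.sqrt_sq_eq_abs]

lemma norm4_sub_mul_inv_mul {r : ℝ} (hr : r ≠ 0) (A ω : Fin 4 → ℝ) (L : ℝ) :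
    norm4 (fun μ => A μ - ω μ * r⁻¹ * L) = |r|⁻¹ * norm4 (fun μ => r * A μ - ω μ * L) := by
  rw [← abs_inv, ← norm4_const_mul]
  congr 1
  funext μ
  field_simp

theorem lintegral_sq_norm4_sub_inv_norm_mul_le {D ω : E3 → Fin 4 → ℝ} {L : E3 → ℝ} {w : ℝ → ℝ}
    {B : ℝ} (hw : Measurable w)
    (h : ∀ x ≠ 0, norm4 (fun μ => ‖x‖ * D x μ - ω x μ * L x) ≤ B * w ‖x‖) :
    ∫⁻ x, ENNReal.ofReal (norm4 (fun μ => D x μ - ω x μ * ‖x‖⁻¹ * L x) ^ 2) ≤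
      (volume : Measure E3).toSphere univ *
        (ENNReal.ofReal (B ^ 2) * ∫⁻ r in Ioi (0 : ℝ), ENNReal.ofReal (w r ^ 2)) := by
  rw [← lintegral_const_mul' _ _ ENNReal.ofReal_ne_top]
  simp_rw [← ENNReal.ofReal_mul (sq_nonneg B), ← mul_pow]
  refine lintegral_sq_le_of_abs_le_div_norm volume finrank_euclideanSpace_fin
    (hw.const_mul B) fun x hx => ?_
  rw [abs_of_nonneg (norm4_nonneg _), norm4_sub_mul_inv_mul (norm_ne_zero_iff.2 hx), abs_norm,
    inv_mul_eq_div]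
  exact div_le_div_of_nonneg_right (h x hx) (norm_nonneg x)

lemma tendsto_zero_of_le_ofReal_jpn_rpow {f : ℝ → ℝ≥0∞} {A p : ℝ} (hp : p < 0)
    (hf : ∀ t, 0 ≤ t → f t ≤ ENNReal.ofReal (A * jpn t ^ p)) : Tendsto f atTop (nhds 0) := by
  have hlim : Tendsto (fun t => ENNReal.ofReal (A * jpn t ^ p)) atTop (nhds 0) := by
    simpa using ENNReal.tendsto_ofReal ((tendsto_jpn_rpow_nhds_zero hp).const_mul A)
  exact tendsto_of_tendsto_of_tendsto_of_le_of_le' tendsto_const_nhds hlim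
    (Eventually.of_forall fun _ => zero_le) ((eventually_ge_atTop 0).mono hf)

theorem radiation_field_L2_convergence_general
    (c1 C ε δ : ℝ) (hc1 : 0 < c1) (hδ0 : 0 < δ) (hδ : δ < 1 / 4)
    (v : Fin 3 → ℝ × E3 → ℝ) (Λ : Fin 3 → ℝ → E3 → ℝ)
    (hpt : ∀ (k : Fin 3) (t : ℝ) (x : E3), 0 ≤ t → x ≠ 0 →
      norm4 (fun μ => ‖x‖ * dfour (v k) (t, x) μ
          - omega4 c1 x μ * Λ k (‖x‖ - c1 * t) (‖x‖⁻¹ • x))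
        ≤ C * ε ^ 2 * jpn (t + ‖x‖) ^ (-1 + 2 * δ) * jpn (c1 * t - ‖x‖) ^ (-δ)) :
    ∃ C' : ℝ, 0 < C' ∧
      (∀ (k : Fin 3) (t : ℝ), 0 ≤ t →
        (∫⁻ x : E3, ENNReal.ofReal
            ((norm4 (fun μ => dfour (v k) (t, x) μ
              - omega4 c1 x μ * ‖x‖⁻¹ * Λ k (‖x‖ - c1 * t) (‖x‖⁻¹ • x))) ^ 2))
          ≤ ENNReal.ofReal (C' * ε ^ 4 * jpn t ^ (-1 + 2 * δ))) ∧
      ∀ k : Fin 3, Tendsto (fun t : ℝ =>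
          ∫⁻ x : E3, ENNReal.ofReal
            ((norm4 (fun μ => dfour (v k) (t, x) μ
              - omega4 c1 x μ * ‖x‖⁻¹ * Λ k (‖x‖ - c1 * t) (‖x‖⁻¹ • x))) ^ 2))
        atTop (nhds 0) := by
  obtain ⟨K, hK, hrad⟩ := exists_lintegral_sq_jpn_add_rpow_mul_jpn_sub_rpow_le
    (p := -1 + 2 * δ) (q := -δ) hc1.le (by linarith) (by linarith) (by linarith)
  rw [show 2 * (-1 + 2 * δ + -δ) + 1 = -1 + 2 * δ by ring] at hrad
  set C' := ((volume : Measure E3).toSphere univ).toReal * C ^ 2 * K + 1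
  have hL2 : ∀ (k : Fin 3) (t : ℝ), 0 ≤ t →
      (∫⁻ x : E3, ENNReal.ofReal
          ((norm4 (fun μ => dfour (v k) (t, x) μ
            - omega4 c1 x μ * ‖x‖⁻¹ * Λ k (‖x‖ - c1 * t) (‖x‖⁻¹ • x))) ^ 2))
        ≤ ENNReal.ofReal (C' * ε ^ 4 * jpn t ^ (-1 + 2 * δ)) := by
    intro k t ht
    have hw : Measurable fun r => jpn (t + r) ^ (-1 + 2 * δ) * jpn (c1 * t - r) ^ (-δ) := by
      have := continuous_jpn.measurable
      fun_prop
    grw [lintegral_sq_norm4_sub_inv_norm_mul_le (B := C * ε ^ 2) hw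
      (by simpa only [mul_assoc] using (hpt k t · ht)), hrad t ht]
    have hσ := ENNReal.ofReal_toReal (measure_ne_top (volume : Measure E3).toSphere univ)
    have hj := jpn_pos t
    rw [← hσ, ← ENNReal.ofReal_mul (by positivity), ← ENNReal.ofReal_mul (by positivity)]
    refine ENNReal.ofReal_le_ofReal ?_
    have : 0 ≤ ε ^ 4 * jpn t ^ (-1 + 2 * δ) := by positivity
    nlinarith
  exact ⟨C', by positivity, hL2,
    fun k => tendsto_zero_of_le_ofReal_jpn_rpow (by linarith) (hL2 k)⟩

/-- If `|r ∂v_k - ⃗ω Λ_k(r-c₁t, x/|x|)| ≤ Cε²⟨t+r⟩^{-1+2δ}⟨c₁t-r⟩^{-δ}`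
pointwise, then `‖∂v_k(t) - ⃗ω r⁻¹Λ_k(r-c₁t,·/|·|)‖²_{L²} ≤ C'ε⁴⟨t⟩^{-1+2δ}`,
which tends to `0` as `t → ∞`. -/
theorem radiation_field_L2_convergence
    (c1 C ε δ : ℝ) (hc1 : 0 < c1) (hC : 0 < C) (hε : 0 < ε)
    (hδ0 : 0 < δ) (hδ : δ < 1 / 4)
    (v : Fin 3 → ℝ × E3 → ℝ) (Λ : Fin 3 → ℝ → E3 → ℝ)
    (hpt : ∀ (k : Fin 3) (t : ℝ) (x : E3), 0 ≤ t → x ≠ 0 →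
      norm4 (fun μ => ‖x‖ * dfour (v k) (t, x) μ
          - omega4 c1 x μ * Λ k (‖x‖ - c1 * t) (‖x‖⁻¹ • x))
        ≤ C * ε ^ 2 * jpn (t + ‖x‖) ^ (-1 + 2 * δ) * jpn (c1 * t - ‖x‖) ^ (-δ)) :
    ∃ C' : ℝ, 0 < C' ∧
      (∀ (k : Fin 3) (t : ℝ), 0 ≤ t →
        (∫⁻ x : E3, ENNReal.ofReal
            ((norm4 (fun μ => dfour (v k) (t, x) μ
              - omega4 c1 x μ * ‖x‖⁻¹ * Λ k (‖x‖ - c1 * t) (‖x‖⁻¹ • x))) ^ 2))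
          ≤ ENNReal.ofReal (C' * ε ^ 4 * jpn t ^ (-1 + 2 * δ))) ∧
      ∀ k : Fin 3, Tendsto (fun t : ℝ =>
          ∫⁻ x : E3, ENNReal.ofReal
            ((norm4 (fun μ => dfour (v k) (t, x) μ
              - omega4 c1 x μ * ‖x‖⁻¹ * Λ k (‖x‖ - c1 * t) (‖x‖⁻¹ • x))) ^ 2))
        atTop (nhds 0) :=
  radiation_field_L2_convergence_general c1 C ε δ hc1 hδ0 hδ v Λ hpt

end
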